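/- For every x₀ > 0, the density f(x) = (1/x₀)·exp(-(x₀-x)/x₀)·𝟙{x ≤ x₀} is an upper semi-continuous log-concave probability density on ℝ with mean zero, and it satisfies f(x₀) = 1/x₀. Consequently the supremum over mean-zero log-concave densities of the value at x₀ equals 1/x₀. -/

import Mathlib

/-!
Let `c = g x₀ > 0` and let `q` be the density of `x₀ - E` with `E` exponential of rate `c`, so
`q x = c e^{c (x - x₀)}` for `x ≤ x₀` and `q = 0` beyond `x₀`. Since `log g` is concave, `log q` is
affine on `(-∞, x₀]` and `q x₀ = g x₀`, the difference `g - q` changes sign at most once, from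
negative to positive. Both have mass one, so `g` has the larger mean: `0 ≥ x₀ - 1 / c`.
Log-concavity also forces exponential tails, so `x ↦ x g x` is integrable and the hypothesis
`∫ x g x = 0` is not a junk value.
-/

open MeasureTheory Set Real ProbabilityTheory

lemma MeasureTheory.Integrable.exists_gt_lt {g : ℝ → ℝ} (hg : Integrable g) (a : ℝ) {r : ℝ}
    (hr : 0 < r) : ∃ b, a < b ∧ g b < r := by
  by_contra! h
  have : IntegrableOn (fun _ => r) (Ioi a) :=
    hg.integrableOn.mono' aestronglyMeasurable_const <|
      (ae_restrict_iff' measurableSet_Ioi).2 <| ae_of_all _ fun x hx => by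
        rw [norm_of_nonneg hr.le]; exact h x hx
  simp [integrableOn_const_iff, hr.ne'] at this

lemma UpperSemicontinuous.indicator {α : Type*} [TopologicalSpace α] {f : α → ℝ} {s : Set α}
    (hf : UpperSemicontinuous f) (hs : IsClosed s) (hf0 : ∀ x ∈ s, 0 ≤ f x) :
    UpperSemicontinuous (s.indicator f) := by
  intro x y hy
  by_cases hx : x ∈ s
  · rw [indicator_of_mem hx] at hy
    filter_upwards [hf x y hy] with z hz
    by_cases hz' : z ∈ s
    · rwa [indicator_of_mem hz']
    · rw [indicator_of_notMem hz']
      exact (hf0 x hx).trans_lt hy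
  · rw [indicator_of_notMem hx] at hy
    filter_upwards [hs.isOpen_compl.mem_nhds hx] with z hz
    rwa [indicator_of_notMem hz]

lemma integral_id_mul_nonneg_of_sign_change {μ : Measure ℝ} {h : ℝ → ℝ} (hh : Integrable h μ)
    (hxh : Integrable (fun x => x * h x) μ) (hcross : ∀ x y, x ≤ y → 0 ≤ h x → 0 ≤ h y)
    (hint : ∫ x, h x ∂μ = 0) : 0 ≤ ∫ x, x * h x ∂μ := by
  set S := {x | 0 ≤ h x}
  by_cases hS : S.Nonempty ∧ BddBelow S
  · set u := sInf S
    have hshift : ∫ x, x * h x ∂μ = ∫ x, (x - u) * h x ∂μ := by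
      simp_rw [sub_mul]
      rw [integral_sub hxh (hh.const_mul u), integral_const_mul, hint, mul_zero, sub_zero]
    rw [hshift]
    refine integral_nonneg fun x => ?_
    rcases lt_or_ge x u with hxu | hux
    · have : x ∉ S := fun hx => (csInf_le hS.2 hx).not_gt hxu
      exact mul_nonneg_of_nonpos_of_nonpos (by linarith) (not_le.1 this).le
    · rcases hux.eq_or_lt with rfl | hux
      · simp
      obtain ⟨y, hy, hyx⟩ := exists_lt_of_csInf_lt hS.1 hux
      exact mul_nonneg (by linarith) (hcross y x hyx.le hy)
  · -- `h` has a constant sign, so it vanishes a.e.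
    have hzero : h =ᵐ[μ] 0 := by
      rcases S.eq_empty_or_nonempty with hSe | hSne
      · have hneg : 0 ≤ -h := fun x => by
          have : x ∉ S := hSe ▸ notMem_empty x
          exact neg_nonneg.2 (not_le.1 this).le
        have := (integral_eq_zero_iff_of_nonneg hneg hh.neg).1 (by simp [integral_neg, hint])
        exact this.mono fun x hx => neg_eq_zero.1 hx
      · have hpos : 0 ≤ h := fun x => by
          obtain ⟨y, hy, hyx⟩ := not_bddBelow_iff.1 (fun hb => hS ⟨hSne, hb⟩) x
          exact hcross y x hyx.le hy
        exact (integral_eq_zero_iff_of_nonneg hpos hh).1 hint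
    have : (fun x => x * h x) =ᵐ[μ] 0 := hzero.mono fun x hx => by simp [hx]
    simp [integral_congr_ae this]

section ExponentialPDF

variable {c : ℝ}

lemma integral_exponentialPDFReal (hc : 0 < c) : ∫ x, exponentialPDFReal c x = 1 := by
  rw [integral_eq_lintegral_of_nonneg_ae (ae_of_all _ (exponentialPDFReal_nonneg hc))
    (measurable_exponentialPDFReal c).aestronglyMeasurable]
  exact (congrArg ENNReal.toReal (lintegral_exponentialPDF_eq_one hc)).trans ENNReal.toReal_one

lemma integral_mul_exponentialPDFReal (hc : 0 < c) :
    ∫ x, x * exponentialPDFReal c x = 1 / c := by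
  rw [← setIntegral_eq_integral_of_forall_compl_eq_zero (s := Ici 0) fun x hx => by
    simp [exponentialPDFReal, gammaPDFReal, (notMem_Ici.1 hx).not_ge],
    integral_Ici_eq_integral_Ioi]
  calc ∫ x in Ioi 0, x * exponentialPDFReal c x
      = ∫ x in Ioi 0, c * (x ^ ((2 : ℝ) - 1) * exp (-(c * x))) := by
        refine setIntegral_congr_fun measurableSet_Ioi fun x (hx : 0 < x) => ?_
        norm_num [exponentialPDFReal, gammaPDFReal, hx.le]
        ring
    _ = 1 / c := by
        rw [integral_const_mul, integral_rpow_mul_exp_neg_mul_Ioi two_pos hc, Gamma_two]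
        norm_num
        field_simp

lemma integrable_exponentialPDFReal (hc : 0 < c) : Integrable (exponentialPDFReal c) :=
  .of_integral_ne_zero (by simp [integral_exponentialPDFReal hc])

lemma integrable_mul_exponentialPDFReal (hc : 0 < c) :
    Integrable fun x => x * exponentialPDFReal c x :=
  .of_integral_ne_zero (by simp [integral_mul_exponentialPDFReal hc, hc.ne'])

lemma integral_exponentialPDFReal_sub (hc : 0 < c) (p : ℝ) :
    ∫ x, exponentialPDFReal c (p - x) = 1 := by
  rw [integral_sub_left_eq_self (exponentialPDFReal c), integral_exponentialPDFReal hc]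

lemma integrable_mul_exponentialPDFReal_sub (hc : 0 < c) (p : ℝ) :
    Integrable fun x => x * exponentialPDFReal c (p - x) := by
  convert ((integrable_exponentialPDFReal hc).const_mul p |>.sub
    (integrable_mul_exponentialPDFReal hc)).comp_sub_left p using 2 with x
  simp only [Pi.sub_apply]
  ring

lemma integral_mul_exponentialPDFReal_sub (hc : 0 < c) (p : ℝ) :
    ∫ x, x * exponentialPDFReal c (p - x) = p - 1 / c := by
  set e := exponentialPDFReal c
  calc ∫ x, x * e (p - x) = ∫ x, (fun y => p * e y - y * e y) (p - x) := by
        congr 1 with x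
        ring
    _ = ∫ y, (p * e y - y * e y) := integral_sub_left_eq_self (fun y => p * e y - y * e y) _ p
    _ = p - 1 / c := by
        rw [integral_sub ((integrable_exponentialPDFReal hc).const_mul p)
          (integrable_mul_exponentialPDFReal hc), integral_const_mul,
          integral_exponentialPDFReal hc, integral_mul_exponentialPDFReal hc, mul_one]

lemma exponentialPDFReal_sub_eq_indicator (c p : ℝ) :
    (fun x => exponentialPDFReal c (p - x)) = (Iic p).indicator fun x => c * exp (c * (x - p)) := by
  ext x
  by_cases hx : x ≤ p <;>
    simp [exponentialPDFReal, gammaPDFReal, indicator, hx, sub_nonneg, neg_sub, mul_sub]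

end ExponentialPDF

def IsLogConcave (g : ℝ → ℝ) : Prop :=
  ∀ x z a b : ℝ, 0 ≤ a → 0 ≤ b → a + b = 1 → g x ^ a * g z ^ b ≤ g (a * x + b * z)

lemma mul_exp_rpow_mul_mul_exp_rpow {C : ℝ} (hC : 0 ≤ C) (k p x z : ℝ) {a b : ℝ}
    (hab : a + b = 1) :
    (C * exp (k * (x - p))) ^ a * (C * exp (k * (z - p))) ^ b =
      C * exp (k * (a * x + b * z - p)) := by
  rw [mul_rpow hC (exp_pos _).le, mul_rpow hC (exp_pos _).le, ← exp_mul, ← exp_mul,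
    mul_mul_mul_comm, ← rpow_add' hC (by rw [hab]; exact one_ne_zero), hab, rpow_one, ← exp_add]
  congr 2
  linear_combination (-(k * p)) * hab

lemma isLogConcave_mul_exp {C : ℝ} (hC : 0 ≤ C) (k p : ℝ) :
    IsLogConcave fun x => C * exp (k * (x - p)) :=
  fun x z _ _ _ _ hab => (mul_exp_rpow_mul_mul_exp_rpow hC k p x z hab).le

namespace IsLogConcave

variable {g : ℝ → ℝ}

lemma indicator (hg : IsLogConcave g) {s : Set ℝ} (hs : Convex ℝ s) (hg0 : ∀ x ∈ s, 0 ≤ g x) :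
    IsLogConcave (s.indicator g) := by
  intro x z a b ha hb hab
  rcases ha.eq_or_lt with rfl | ha
  · obtain rfl : b = 1 := by linarith
    simp
  rcases hb.eq_or_lt with rfl | hb
  · obtain rfl : a = 1 := by linarith
    simp
  have hnonneg := indicator_nonneg hg0 (a * x + b * z)
  by_cases hx : x ∈ s
  · by_cases hz : z ∈ s
    · have hxz : a * x + b * z ∈ s := hs hx hz ha.le hb.le hab
      rw [indicator_of_mem hx, indicator_of_mem hz, indicator_of_mem hxz]
      exact hg x z a b ha.le hb.le hab
    · rw [indicator_of_notMem hz, zero_rpow hb.ne', mul_zero]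
      exact hnonneg
  · rw [indicator_of_notMem hx, zero_rpow ha.ne', zero_mul]
    exact hnonneg

lemma comp_neg (hg : IsLogConcave g) : IsLogConcave fun x => g (-x) := by
  intro x z a b ha hb hab
  convert hg (-x) (-z) a b ha hb hab using 2
  ring

lemma mul_exp_le_of_le_of_le (hg : IsLogConcave g) {C k p x y z : ℝ} (hC : 0 ≤ C)
    (hy : y ∈ Icc x z) (hx : C * exp (k * (x - p)) ≤ g x) (hz : C * exp (k * (z - p)) ≤ g z) :
    C * exp (k * (y - p)) ≤ g y := by
  obtain ⟨a, b, ha, hb, hab, rfl⟩ : y ∈ segment ℝ x z := by rwa [segment_eq_Icc (hy.1.trans hy.2)]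
  simp only [smul_eq_mul]
  calc C * exp (k * (a * x + b * z - p))
      = (C * exp (k * (x - p))) ^ a * (C * exp (k * (z - p))) ^ b :=
        (mul_exp_rpow_mul_mul_exp_rpow hC k p x z hab).symm
    _ ≤ g x ^ a * g z ^ b := by
        gcongr
        exact rpow_nonneg ((mul_nonneg hC (exp_pos _).le).trans hx) _
    _ ≤ g (a * x + b * z) := hg x z a b ha hb hab

lemma exists_le_mul_exp_neg (hg : IsLogConcave g) (hgi : Integrable g) {a : ℝ} (ha : 0 < g a) :
    ∃ b β, 0 < β ∧ ∀ t, b ≤ t → g t ≤ g a * exp (-β * (t - a)) := by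
  obtain ⟨b, hab, hba⟩ := hgi.exists_gt_lt a ha
  have hd : 0 < b - a := sub_pos.2 hab
  set β := (g a - g b) / (2 * g a) / (b - a)
  have hβb : g b < g a * exp (-β * (b - a)) :=
    calc g b < g a * (-(β * (b - a)) + 1) := by
          simp only [β]
          rw [div_mul_cancel₀ _ hd.ne']
          field_simp
          linarith
      _ ≤ g a * exp (-β * (b - a)) := by
          rw [← neg_mul]
          gcongr
          exact add_one_le_exp _
  -- the exponential through `(a, g a)` lies above `g` at `b`, hence on all of `[b, ∞)`
  refine ⟨b, β, div_pos (div_pos (by linarith) (by positivity)) hd,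
    fun t hbt => le_of_not_gt fun ht => hβb.not_ge ?_⟩
  exact hg.mul_exp_le_of_le_of_le ha.le ⟨hab.le, hbt⟩ (by simp) ht.le

lemma integrableOn_Ioi_id_mul (hg : IsLogConcave g) (hg0 : ∀ x, 0 ≤ g x) (hgi : Integrable g)
    {a : ℝ} (ha : 0 < g a) : IntegrableOn (fun x => x * g x) (Ioi 0) := by
  obtain ⟨b, β, hβ, htail⟩ := hg.exists_le_mul_exp_neg hgi ha
  have hexp : IntegrableOn (fun x => x * exp (-β * (x - a))) (Ioi 0) := by
    refine IntegrableOn.congr_fun ((integrableOn_rpow_mul_exp_neg_mul_rpow (s := 1) (p := 1)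
      (by norm_num) one_pos hβ).const_mul (exp (β * a))) (fun x _ => ?_) measurableSet_Ioi
    rw [rpow_one, mul_left_comm, ← exp_add]
    ring_nf
  refine ((hgi.integrableOn.const_mul |b|).add (hexp.const_mul (g a))).mono'
    (aestronglyMeasurable_id.mul hgi.aestronglyMeasurable).restrict <|
    (ae_restrict_iff' measurableSet_Ioi).2 <| ae_of_all _ fun x (hx : 0 < x) => ?_
  rw [Pi.add_apply, norm_of_nonneg (mul_nonneg hx.le (hg0 x))]
  rcases le_or_gt b x with hbx | hxb
  · have := mul_le_mul_of_nonneg_left (htail x hbx) hx.le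
    nlinarith [abs_nonneg b, hg0 x]
  · have := mul_le_mul_of_nonneg_right (hxb.le.trans (le_abs_self b)) (hg0 x)
    have : 0 ≤ g a * (x * exp (-β * (x - a))) := by positivity
    linarith

lemma integrable_id_mul (hg : IsLogConcave g) (hg0 : ∀ x, 0 ≤ g x) (hgi : Integrable g)
    {a : ℝ} (ha : 0 < g a) : Integrable fun x => x * g x := by
  have hleft : IntegrableOn (fun x => x * g x) (Iio 0) := by
    have h := hg.comp_neg.integrableOn_Ioi_id_mul (fun x => hg0 (-x)) hgi.comp_neg (a := -a)
      (by simpa)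
    rw [← neg_zero] at h
    simpa using h.comp_neg_Iio.neg
  rw [← integrableOn_univ, ← Iio_union_Ici (a := (0 : ℝ)), integrableOn_union,
    integrableOn_Ici_iff_integrableOn_Ioi]
  exact ⟨hleft, hg.integrableOn_Ioi_id_mul hg0 hgi ha⟩

theorem apply_le_one_div_of_integral_mul_eq_zero (hg : IsLogConcave g) (hg0 : ∀ x, 0 ≤ g x)
    (hint : ∫ x, g x = 1) (hmean : ∫ x, x * g x = 0) {x₀ : ℝ} (hx₀ : 0 < x₀) :
    g x₀ ≤ 1 / x₀ := by
  have hgi : Integrable g := .of_integral_ne_zero (by simp [hint])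
  rcases (hg0 x₀).eq_or_lt with h0 | hc
  · rw [← h0]; positivity
  set c := g x₀
  set q := fun x => exponentialPDFReal c (x₀ - x) with hq
  have hcross : ∀ x y, x ≤ y → 0 ≤ g x - q x → 0 ≤ g y - q y := by
    intro x y hxy hx
    rw [hq, exponentialPDFReal_sub_eq_indicator] at hx ⊢
    by_cases hy : y ≤ x₀
    · rw [sub_nonneg] at hx ⊢
      rw [indicator_of_mem (mem_Iic.2 (hxy.trans hy))] at hx
      rw [indicator_of_mem (mem_Iic.2 hy)]
      exact hg.mul_exp_le_of_le_of_le hc.le ⟨hxy, hy⟩ hx (by simp [c])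
    · rw [indicator_of_notMem (by simpa using hy), sub_zero]
      exact hg0 y
  have hqi : Integrable q := (integrable_exponentialPDFReal hc).comp_sub_left x₀
  have hxq : Integrable fun x => x * q x := integrable_mul_exponentialPDFReal_sub hc x₀
  have hxg : Integrable fun x => x * g x := hg.integrable_id_mul hg0 hgi hc
  have key := integral_id_mul_nonneg_of_sign_change (h := fun x => g x - q x) (hgi.sub hqi)
    ((hxg.sub hxq).congr (ae_of_all _ fun x => (mul_sub _ _ _).symm)) hcross
    (by rw [integral_sub hgi hqi, hint, integral_exponentialPDFReal_sub hc x₀, sub_self])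
  simp only [mul_sub] at key
  rw [integral_sub hxg hxq, hmean, integral_mul_exponentialPDFReal_sub hc x₀] at key
  rw [le_div_iff₀ hx₀, mul_comm, ← le_div_iff₀ hc]
  linarith

end IsLogConcave

/-- For `x₀ > 0`, the density `f x = (1/x₀)·exp(-(x₀-x)/x₀)` for `x ≤ x₀` (and `0` otherwise)
is an upper semi-continuous log-concave probability density on `ℝ` with mean zero satisfying
`f x₀ = 1/x₀`; consequently the supremum over all mean-zero upper semi-continuous
log-concave densities of the value at `x₀` equals `1/x₀`. -/
theorem logconcave_mean_zero_value_sup (x₀ : ℝ) (hx₀ : 0 < x₀) :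
    (∀ x, 0 ≤ (fun x => if x ≤ x₀ then (1 / x₀) * Real.exp (-(x₀ - x) / x₀) else 0) x) ∧
    UpperSemicontinuous (fun x => if x ≤ x₀ then (1 / x₀) * Real.exp (-(x₀ - x) / x₀) else 0) ∧
    (∀ x y a b : ℝ, 0 ≤ a → 0 ≤ b → a + b = 1 →
      (fun x => if x ≤ x₀ then (1 / x₀) * Real.exp (-(x₀ - x) / x₀) else 0) x ^ a *
        (fun x => if x ≤ x₀ then (1 / x₀) * Real.exp (-(x₀ - x) / x₀) else 0) y ^ b ≤
        (fun x => if x ≤ x₀ then (1 / x₀) * Real.exp (-(x₀ - x) / x₀) else 0) (a * x + b * y)) ∧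
    (∫ x, (fun x => if x ≤ x₀ then (1 / x₀) * Real.exp (-(x₀ - x) / x₀) else 0) x) = 1 ∧
    (∫ x, x * (fun x => if x ≤ x₀ then (1 / x₀) * Real.exp (-(x₀ - x) / x₀) else 0) x) = 0 ∧
    (fun x => if x ≤ x₀ then (1 / x₀) * Real.exp (-(x₀ - x) / x₀) else 0) x₀ = 1 / x₀ ∧
    sSup {y : ℝ | ∃ g : ℝ → ℝ, (∀ x, 0 ≤ g x) ∧ UpperSemicontinuous g ∧
      (∀ x z a b : ℝ, 0 ≤ a → 0 ≤ b → a + b = 1 →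
        g x ^ a * g z ^ b ≤ g (a * x + b * z)) ∧
      (∫ x, g x) = 1 ∧ (∫ x, x * g x) = 0 ∧ g x₀ = y} = 1 / x₀ := by
  have hc : 0 < 1 / x₀ := by positivity
  have hf : (fun x => if x ≤ x₀ then (1 / x₀) * Real.exp (-(x₀ - x) / x₀) else 0) =
      fun x => exponentialPDFReal (1 / x₀) (x₀ - x) := by
    rw [exponentialPDFReal_sub_eq_indicator]
    ext x
    simp only [indicator, mem_Iic]
    split_ifs
    · ring_nf
    · rfl
  rw [hf]
  have h0 := fun x => exponentialPDFReal_nonneg hc (x₀ - x)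
  have husc : UpperSemicontinuous fun x => exponentialPDFReal (1 / x₀) (x₀ - x) := by
    rw [exponentialPDFReal_sub_eq_indicator]
    exact (by fun_prop : Continuous _).upperSemicontinuous.indicator isClosed_Iic
      fun x _ => by positivity
  have hlc : IsLogConcave fun x => exponentialPDFReal (1 / x₀) (x₀ - x) := by
    rw [exponentialPDFReal_sub_eq_indicator]
    exact (isLogConcave_mul_exp hc.le _ _).indicator (convex_Iic x₀) fun x _ => by positivity
  have hint := integral_exponentialPDFReal_sub hc x₀
  have hmean : ∫ x, x * exponentialPDFReal (1 / x₀) (x₀ - x) = 0 := by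
    rw [integral_mul_exponentialPDFReal_sub hc]
    simp
  have hval : exponentialPDFReal (1 / x₀) (x₀ - x₀) = 1 / x₀ := by
    simp [exponentialPDFReal, gammaPDFReal]
  refine ⟨h0, husc, hlc, hint, hmean, hval,
    IsGreatest.csSup_eq ⟨⟨_, h0, husc, hlc, hint, hmean, hval⟩, ?_⟩⟩
  rintro y ⟨g, hg0, -, hg, hgint, hgmean, rfl⟩
  exact IsLogConcave.apply_le_one_div_of_integral_mul_eq_zero hg hg0 hgint hgmean hx₀
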